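/- For every real s > 0 the series T_L(s) := Σ_{k=0}^{∞} (k+1)·[ (Σ_{l=0}^{k+1} q^{2nl})·(k+3/2)^{−2−s} + (Σ_{l=0}^{k−1} q^{2nl})·(k+1/2)^{−2−s} ] and T_M(s) := Σ_{k=0}^{∞} (Σ_{m=0}^{k} q^{2nm})·[ (k+2)·(k+3/2)^{−2−s} + k·(k+1/2)^{−2−s} ] converge, and lim_{s→0⁺} s·T_L(s) = lim_{s→0⁺} s·T_M(s) = 2/(1 − q^{2n}). (T_L(s) and T_M(s) are the traces Tr(L_q^n |D|^{−2−s}) and Tr(M_q^n |D|^{−2−s}) of the n-th powers of the diagonal operators L_q v^{j,s}_{m,l} = q^{2l} v^{j,s}_{m,l} and M_q v^{j,s}_{m,l} = q^{2m} v^{j,s}_{m,l} on the Hilbert space of the SU_q(2) spectral triple, so these limits compute the noncommutative integrals ∮ L_q^n |D|^{−2} = ∮ M_q^n |D|^{−2} = 2/(1 − q^{2n}).) -/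

import Mathlib

noncomputable section

/-- `Tr(L_q^n |D|^(-2-s))` for the diagonal operator `L_q v^{j,s}_{m,l} = q^(2l) v^{j,s}_{m,l}`
of the `SU_q(2)` spectral triple. -/
def traceLq (q : ℝ) (n : ℕ) (s : ℝ) : ℝ :=
  ∑' k : ℕ, ((k : ℝ) + 1) *
    ((∑ l ∈ Finset.range (k + 2), q ^ (2 * n * l)) * ((k : ℝ) + 3 / 2) ^ (-(2 + s))
      + (∑ l ∈ Finset.range k, q ^ (2 * n * l)) * ((k : ℝ) + 1 / 2) ^ (-(2 + s)))

/-- `Tr(M_q^n |D|^(-2-s))` for the diagonal operator `M_q v^{j,s}_{m,l} = q^(2m) v^{j,s}_{m,l}`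
of the `SU_q(2)` spectral triple. -/
def traceMq (q : ℝ) (n : ℕ) (s : ℝ) : ℝ :=
  ∑' k : ℕ, (∑ m ∈ Finset.range (k + 1), q ^ (2 * n * m)) *
    (((k : ℝ) + 2) * ((k : ℝ) + 3 / 2) ^ (-(2 + s))
      + (k : ℝ) * ((k : ℝ) + 1 / 2) ^ (-(2 + s)))

/-!
With `r = q ^ (2 n)`, a partial geometric sum `∑_{l < m} r ^ l` differs from `(1 - r)⁻¹` by
`O(r ^ m)`, so in both traces the coefficient of `(k + c) ^ (-2-s)` (for `c = 3/2` and `c = 1/2`)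
is `(1 - r)⁻¹ (k + c)` up to a bounded error. Each trace is therefore
`(1 - r)⁻¹ ∑ₖ ((k + 3/2) ^ (-1-s) + (k + 1/2) ^ (-1-s))` plus a sum that stays bounded as `s → 0⁺`,
and the integral test shows that `s ∑ₖ (k + c) ^ (-1-s) → 1`.
-/

open Filter Topology Set MeasureTheory

section ShiftedZeta

variable {c s : ℝ}

lemma shifted_rpow_nonneg (hc : 0 < c) (t : ℝ) : ∀ x ∈ Ioi (0 : ℝ), 0 ≤ (x + c) ^ t :=
  fun x hx => Real.rpow_nonneg (by rw [mem_Ioi] at hx; linarith) t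

lemma antitoneOn_shifted_rpow_neg (hc : 0 < c) (hs : 0 ≤ s) :
    AntitoneOn (fun x : ℝ => (x + c) ^ (-s)) (Ici 0) := fun x hx y _ hxy =>
  Real.rpow_le_rpow_of_nonpos (by simp only [mem_Ici] at hx; linarith) (by linarith)
    (neg_nonpos.2 hs)

lemma hasDerivAt_shifted_rpow_neg (hc : 0 < c) (hs : s ≠ 0) {x : ℝ} (hx : 0 ≤ x) :
    HasDerivAt (fun x : ℝ => -(x + c) ^ (-s) / s) ((x + c) ^ (-(1 + s))) x := by
  have h : HasDerivAt (fun x : ℝ => (x + c) ^ (-s)) (1 * -s * (x + c) ^ (-s - 1)) x :=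
    ((hasDerivAt_id' x).add_const c).rpow_const (Or.inl (by linarith))
  refine (h.neg.div_const s).congr_deriv ?_
  rw [show -s - 1 = -(1 + s) by ring]
  field_simp

lemma integral_Ioi_shifted_rpow (hc : 0 < c) (hs : 0 < s) :
    IntegrableOn (fun x : ℝ => (x + c) ^ (-(1 + s))) (Ioi 0) ∧
      ∫ x in Ioi 0, (x + c) ^ (-(1 + s)) = c ^ (-s) / s := by
  have hderiv : ∀ x ∈ Ici (0:ℝ), HasDerivAt (fun x : ℝ => -(x + c) ^ (-s) / s)
      ((x + c) ^ (-(1 + s))) x := fun x hx => hasDerivAt_shifted_rpow_neg hc hs.ne' hx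
  have hnonneg := shifted_rpow_nonneg hc (-(1 + s))
  have hlim : Tendsto (fun x : ℝ => -(x + c) ^ (-s) / s) atTop (𝓝 (-0 / s)) :=
    ((tendsto_rpow_neg_atTop hs).comp
      (tendsto_atTop_add_const_right _ c tendsto_id)).neg.div_const s
  refine ⟨integrableOn_Ioi_deriv_of_nonneg' hderiv hnonneg hlim, ?_⟩
  rw [integral_Ioi_of_hasDerivAt_of_nonneg' hderiv hnonneg hlim]
  simp [neg_div]

lemma summable_shifted_rpow (hc : 0 < c) (hs : 0 < s) :
    Summable (fun k : ℕ => ((k : ℝ) + c) ^ (-(1 + s))) :=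
  (antitoneOn_shifted_rpow_neg hc (by linarith)).summable_of_integrableOn_Ioi_zero
    (integral_Ioi_shifted_rpow hc hs).1 (shifted_rpow_nonneg hc _)

lemma tsum_shifted_rpow_mem_Icc (hc : 0 < c) (hs : 0 < s) :
    ∑' k : ℕ, ((k : ℝ) + c) ^ (-(1 + s)) ∈ Icc (c ^ (-s) / s) (c ^ (-(1 + s)) + c ^ (-s) / s) := by
  have hanti := antitoneOn_shifted_rpow_neg hc (s := 1 + s) (by linarith)
  obtain ⟨hint, hval⟩ := integral_Ioi_shifted_rpow hc hs
  have hnonneg := shifted_rpow_nonneg hc (-(1 + s))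
  constructor
  · have h := hanti.integral_le_tsum (summable_shifted_rpow hc hs) hnonneg
    simp only [hval] at h
    exact h
  · have h := hanti.tsum_le_integral hint hnonneg
    simp only [hval, zero_add] at h
    exact h

theorem tendsto_mul_tsum_shifted_rpow (hc : 0 < c) :
    Tendsto (fun s => s * ∑' k : ℕ, ((k : ℝ) + c) ^ (-(1 + s))) (𝓝[>] 0) (𝓝 1) := by
  have hcont : Continuous fun s : ℝ => c ^ (-s) := by fun_prop (disch := positivity)
  have hlower : Tendsto (fun s : ℝ => c ^ (-s)) (𝓝[>] 0) (𝓝 1) := by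
    simpa using (hcont.tendsto 0).mono_left nhdsWithin_le_nhds
  have hupper : Tendsto (fun s : ℝ => c ^ (-s) + s * c ^ (-(1 + s))) (𝓝[>] 0) (𝓝 1) := by
    have : Continuous fun s : ℝ => c ^ (-s) + s * c ^ (-(1 + s)) := by
      fun_prop (disch := positivity)
    simpa using (this.tendsto 0).mono_left nhdsWithin_le_nhds
  refine tendsto_of_tendsto_of_tendsto_of_le_of_le' hlower hupper ?_ ?_ <;>
    filter_upwards [self_mem_nhdsWithin] with s (hs : 0 < s)
  · have := mul_le_mul_of_nonneg_left (tsum_shifted_rpow_mem_Icc hc hs).1 hs.le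
    rwa [mul_div_cancel₀ _ hs.ne'] at this
  · have := mul_le_mul_of_nonneg_left (tsum_shifted_rpow_mem_Icc hc hs).2 hs.le
    rw [mul_add, mul_div_cancel₀ _ hs.ne'] at this
    linarith

end ShiftedZeta

section AffineCoefficients

variable {b : ℕ → ℝ} {β c C s : ℝ}

lemma mul_rpow_neg_two_add {x : ℝ} (hx : 0 < x) (s : ℝ) : x * x ^ (-(2 + s)) = x ^ (-(1 + s)) := by
  nth_rw 1 [← Real.rpow_one x]
  rw [← Real.rpow_add hx]
  ring_nf

lemma rpow_neg_two_add_le {x : ℝ} (hx : 0 < x) (hs0 : 0 ≤ s) (hs1 : s ≤ 1) :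
    x ^ (-(2 + s)) ≤ x ^ (-2 : ℝ) + x ^ (-3 : ℝ) := by
  rcases le_total 1 x with h1 | h1
  · have := Real.rpow_le_rpow_of_exponent_le h1 (by linarith : -(2 + s) ≤ -2)
    linarith [Real.rpow_nonneg hx.le (-3 : ℝ)]
  · have := Real.rpow_le_rpow_of_exponent_ge hx h1 (by linarith : -3 ≤ -(2 + s))
    linarith [Real.rpow_nonneg hx.le (-2 : ℝ)]

lemma mul_shifted_rpow_eq (hc : 0 < c) (k : ℕ) :
    b k * ((k : ℝ) + c) ^ (-(2 + s)) =
      β * ((k : ℝ) + c) ^ (-(1 + s)) + (b k - β * (k + c)) * ((k : ℝ) + c) ^ (-(2 + s)) := by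
  rw [← mul_rpow_neg_two_add (by positivity : (0 : ℝ) < k + c)]
  ring

variable (hc : 0 < c) (hb : ∀ k : ℕ, |b k - β * (k + c)| ≤ C)
include hc hb

lemma summable_deviation_mul_shifted_rpow (hs : 0 < s) :
    Summable (fun k : ℕ => (b k - β * (k + c)) * ((k : ℝ) + c) ^ (-(2 + s))) := by
  refine Summable.of_norm_bounded ((summable_shifted_rpow hc (s := 1 + s) (by linarith)).mul_left C)
    fun k => ?_
  rw [Real.norm_eq_abs, abs_mul, abs_of_nonneg (Real.rpow_nonneg (by positivity) _),
    show -(1 + (1 + s)) = -(2 + s) by ring]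
  exact mul_le_mul_of_nonneg_right (hb k) (Real.rpow_nonneg (by positivity) _)

lemma summable_mul_shifted_rpow (hs : 0 < s) :
    Summable (fun k : ℕ => b k * ((k : ℝ) + c) ^ (-(2 + s))) := by
  simp_rw [mul_shifted_rpow_eq (β := β) hc]
  exact ((summable_shifted_rpow hc hs).mul_left β).add
    (summable_deviation_mul_shifted_rpow hc hb hs)

lemma abs_tsum_deviation_mul_shifted_rpow_le (hs0 : 0 < s) (hs1 : s ≤ 1) :
    |∑' k : ℕ, (b k - β * (k + c)) * ((k : ℝ) + c) ^ (-(2 + s))| ≤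
      C * ∑' k : ℕ, (((k : ℝ) + c) ^ (-2 : ℝ) + ((k : ℝ) + c) ^ (-3 : ℝ)) := by
  have hdom : Summable fun k : ℕ => ((k : ℝ) + c) ^ (-2 : ℝ) + ((k : ℝ) + c) ^ (-3 : ℝ) := by
    convert (summable_shifted_rpow hc one_pos).add (summable_shifted_rpow hc two_pos) using 3 <;>
      norm_num
  rw [← tsum_mul_left]
  refine (norm_tsum_le_tsum_norm (summable_deviation_mul_shifted_rpow hc hb hs0).norm).trans
    ((summable_deviation_mul_shifted_rpow hc hb hs0).norm.tsum_le_tsum (fun k => ?_)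
      (hdom.mul_left C))
  have hk : (0 : ℝ) < k + c := by positivity
  rw [Real.norm_eq_abs, abs_mul, abs_of_nonneg (Real.rpow_nonneg hk.le _)]
  exact mul_le_mul (hb k) (rpow_neg_two_add_le hk hs0.le hs1) (Real.rpow_nonneg hk.le _)
    ((abs_nonneg _).trans (hb k))

theorem tendsto_mul_tsum_mul_shifted_rpow :
    Tendsto (fun s => s * ∑' k : ℕ, b k * ((k : ℝ) + c) ^ (-(2 + s))) (𝓝[>] 0) (𝓝 β) := by
  set M := ∑' k : ℕ, (((k : ℝ) + c) ^ (-2 : ℝ) + ((k : ℝ) + c) ^ (-3 : ℝ))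
  have hdev : Tendsto (fun s => s * ∑' k : ℕ, (b k - β * (k + c)) * ((k : ℝ) + c) ^ (-(2 + s)))
      (𝓝[>] 0) (𝓝 0) := by
    refine squeeze_zero_norm' ?_
      (by simpa using ((continuous_mul_const (C * M)).tendsto 0).mono_left nhdsWithin_le_nhds)
    filter_upwards [Ioc_mem_nhdsGT zero_lt_one] with s hs
    rw [Real.norm_eq_abs, abs_mul, abs_of_pos hs.1]
    exact mul_le_mul_of_nonneg_left (abs_tsum_deviation_mul_shifted_rpow_le hc hb hs.1 hs.2) hs.1.le
  have hmain := ((tendsto_mul_tsum_shifted_rpow hc).const_mul β).add hdev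
  rw [mul_one, add_zero] at hmain
  refine hmain.congr' ?_
  filter_upwards [self_mem_nhdsWithin] with s (hs : 0 < s)
  simp_rw [mul_shifted_rpow_eq (β := β) (s := s) hc]
  rw [((summable_shifted_rpow hc hs).mul_left β).tsum_add
    (summable_deviation_mul_shifted_rpow hc hb hs), tsum_mul_left]
  ring

end AffineCoefficients

lemma tendsto_mul_tsum_add_mul_shifted_rpow {b b' : ℕ → ℝ} {β c c' C C' : ℝ}
    (hc : 0 < c) (hb : ∀ k : ℕ, |b k - β * (k + c)| ≤ C)
    (hc' : 0 < c') (hb' : ∀ k : ℕ, |b' k - β * (k + c')| ≤ C') :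
    Tendsto (fun s => s * ∑' k : ℕ,
        (b k * ((k : ℝ) + c) ^ (-(2 + s)) + b' k * ((k : ℝ) + c') ^ (-(2 + s))))
      (𝓝[>] 0) (𝓝 (2 * β)) := by
  rw [two_mul]
  refine ((tendsto_mul_tsum_mul_shifted_rpow hc hb).add
    (tendsto_mul_tsum_mul_shifted_rpow hc' hb')).congr' ?_
  filter_upwards [self_mem_nhdsWithin] with s (hs : 0 < s)
  rw [(summable_mul_shifted_rpow hc hb hs).tsum_add (summable_mul_shifted_rpow hc' hb' hs), mul_add]

lemma exists_abs_mul_geom_sum_sub_le {r : ℝ} (hr0 : 0 ≤ r) (hr1 : r < 1) (a c : ℝ) (j : ℕ) :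
    ∃ C, ∀ k : ℕ, |(k + a) * ∑ l ∈ Finset.range (k + j), r ^ l - (1 - r)⁻¹ * (k + c)| ≤ C := by
  have hr : 1 - r ≠ 0 := by linarith
  have hr' : r - 1 ≠ 0 := by linarith
  have hclosed (k : ℕ) : (k + a) * ∑ l ∈ Finset.range (k + j), r ^ l - (1 - r)⁻¹ * (k + c) =
      (1 - r)⁻¹ * (a - c - r ^ j * ((k : ℝ) * r ^ k + a * r ^ k)) := by
    rw [geom_sum_eq (by linarith), pow_add]
    field_simp
    ring
  have hlim : Tendsto (fun k : ℕ => (1 - r)⁻¹ * (a - c - r ^ j * ((k : ℝ) * r ^ k + a * r ^ k)))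
      atTop (𝓝 ((1 - r)⁻¹ * (a - c - r ^ j * (0 + a * 0)))) :=
    (tendsto_const_nhds.sub (((tendsto_self_mul_const_pow_of_lt_one hr0 hr1).add
      ((tendsto_pow_atTop_nhds_zero_of_lt_one hr0 hr1).const_mul a)).const_mul _)).const_mul _
  obtain ⟨C, hC⟩ := isBounded_iff_forall_norm_le.1 (Metric.isBounded_range_of_tendsto _ hlim)
  exact ⟨C, fun k => hclosed k ▸ hC _ (mem_range_self k)⟩

/-- for `0 < q < 1` and `n ≥ 1`, the series defining
`Tr(L_q^n |D|^(-2-s))` and `Tr(M_q^n |D|^(-2-s))` converge for every `s > 0`, and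
`∮ L_q^n |D|⁻² = ∮ M_q^n |D|⁻² = 2/(1 - q^(2n))`, i.e.
`s·T_L(s) → 2/(1-q^(2n))` and `s·T_M(s) → 2/(1-q^(2n))` as `s → 0⁺`. -/
theorem suq2_ncint_Lq_Mq (q : ℝ) (hq0 : 0 < q) (hq1 : q < 1) (n : ℕ) (hn : 1 ≤ n) :
    (∀ s : ℝ, 0 < s →
      Summable (fun k : ℕ => ((k : ℝ) + 1) *
        ((∑ l ∈ Finset.range (k + 2), q ^ (2 * n * l)) * ((k : ℝ) + 3 / 2) ^ (-(2 + s))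
          + (∑ l ∈ Finset.range k, q ^ (2 * n * l)) * ((k : ℝ) + 1 / 2) ^ (-(2 + s)))) ∧
      Summable (fun k : ℕ => (∑ m ∈ Finset.range (k + 1), q ^ (2 * n * m)) *
        (((k : ℝ) + 2) * ((k : ℝ) + 3 / 2) ^ (-(2 + s))
          + (k : ℝ) * ((k : ℝ) + 1 / 2) ^ (-(2 + s))))) ∧
    Filter.Tendsto (fun s : ℝ => s * traceLq q n s) (nhdsWithin 0 (Set.Ioi 0))
      (nhds (2 / (1 - q ^ (2 * n)))) ∧
    Filter.Tendsto (fun s : ℝ => s * traceMq q n s) (nhdsWithin 0 (Set.Ioi 0))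
      (nhds (2 / (1 - q ^ (2 * n)))) := by
  have hr0 : 0 ≤ q ^ (2 * n) := by positivity
  have hr1 : q ^ (2 * n) < 1 := pow_lt_one₀ hq0.le hq1 (by omega)
  obtain ⟨C₁, h₁⟩ := exists_abs_mul_geom_sum_sub_le hr0 hr1 1 (3 / 2) 2
  obtain ⟨C₂, h₂⟩ := exists_abs_mul_geom_sum_sub_le hr0 hr1 1 (1 / 2) 0
  obtain ⟨C₃, h₃⟩ := exists_abs_mul_geom_sum_sub_le hr0 hr1 2 (3 / 2) 1
  obtain ⟨C₄, h₄⟩ := exists_abs_mul_geom_sum_sub_le hr0 hr1 0 (1 / 2) 1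
  simp only [add_zero] at h₂ h₄
  simp only [traceLq, traceMq, pow_mul q (2 * n), div_eq_mul_inv (2 : ℝ)]
  refine ⟨fun s hs => ⟨?_, ?_⟩, ?_, ?_⟩
  · exact ((summable_mul_shifted_rpow (by norm_num) h₁ hs).add
      (summable_mul_shifted_rpow (by norm_num) h₂ hs)).congr fun k => by ring
  · exact ((summable_mul_shifted_rpow (by norm_num) h₃ hs).add
      (summable_mul_shifted_rpow (by norm_num) h₄ hs)).congr fun k => by ring
  · exact (tendsto_mul_tsum_add_mul_shifted_rpow (by norm_num) h₁ (by norm_num) h₂).congr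
      fun s => by congr 1; exact tsum_congr fun k => by ring
  · exact (tendsto_mul_tsum_add_mul_shifted_rpow (by norm_num) h₃ (by norm_num) h₄).congr
      fun s => by congr 1; exact tsum_congr fun k => by ring
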